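/- arXiv:1405.2385 — 4 statements merged into one kernel-verified Lean document; each statement's English description precedes it below -/
import Mathlib

section
/- Let k be an integer with 1 ≤ k ≤ n and let g ∈ Q_k^ppd, acting on the natural module V = F_q^n. Then there exists a positive integer B such that the fixed-point subspace ker(g^B − 1) has dimension n − k, and there exists a g-invariant subspace U of V of dimension k with V = U ⊕ ker(g^B − 1) such that the only subspaces of U invariant under g^B are 0 and U. -/
open Polynomial

/-- `Qk n F k` is the set of elements `g` of `SL_n(q)` (where `q = |F|`) whose characteristic
polynomial factors as `f * h` with `f` irreducible of degree `k` over `F` and with no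
irreducible factor of `h` of degree divisible by `k`. -/
def Qk (n : ℕ) (F : Type) [Field F] [Fintype F] (k : ℕ) :
    Set (Matrix.SpecialLinearGroup (Fin n) F) :=
  {g | ∃ f h : F[X],
    Matrix.charpoly (g : Matrix (Fin n) (Fin n) F) = f * h ∧
    Irreducible f ∧ f.natDegree = k ∧
    ∀ p : F[X], Irreducible p → p ∣ h → ¬ k ∣ p.natDegree}

/-- `IsPPD q m r` says that `r` is a primitive prime divisor of `q ^ m - 1`, that is,
a prime dividing `q ^ m - 1` but not dividing `q ^ i - 1` for any `1 ≤ i < m`. -/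
def IsPPD (q m r : ℕ) : Prop :=
  r.Prime ∧ r ∣ q ^ m - 1 ∧ ∀ i : ℕ, 1 ≤ i → i < m → ¬ r ∣ q ^ i - 1

/-- `QkPPD n F k` is the subset of `Qk n F k` of those elements whose order is divisible by
some primitive prime divisor of `q ^ k - 1` where `q = |F|`. -/
def QkPPD (n : ℕ) (F : Type) [Field F] [Fintype F] (k : ℕ) :
    Set (Matrix.SpecialLinearGroup (Fin n) F) :=
  {g | g ∈ Qk n F k ∧ ∃ r : ℕ, IsPPD (Fintype.card F) k r ∧ r ∣ orderOf g}

/-- `QkFull n F k` is the subset of `QkPPD n F k` of those elements `g` such that for every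
primitive prime divisor `r` of `q ^ k - 1` which divides `|SL_n(q)|`, the order of `g` is
divisible by the largest power of `r` dividing `q ^ k - 1`. -/
def QkFull (n : ℕ) (F : Type) [Field F] [Fintype F] (k : ℕ) :
    Set (Matrix.SpecialLinearGroup (Fin n) F) :=
  {g | g ∈ QkPPD n F k ∧ ∀ r : ℕ, IsPPD (Fintype.card F) k r →
    r ∣ Nat.card (Matrix.SpecialLinearGroup (Fin n) F) →
    r ^ ((Fintype.card F ^ k - 1).factorization r) ∣ orderOf g}

/-! Write `charpoly g = f * h`. No irreducible factor of `h` has degree `k = deg f`, so `f` and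
`h` are coprime and `V = U ⊕ W` with `U = ker f(g)`, `W = ker h(g)`; since every irreducible
factor of a characteristic polynomial divides the minimal polynomial, `g` acts on `U` with
characteristic polynomial `f`, so `dim U = k`.

Take `B = |g| / r`. An element of order `r` in an extension of `𝔽_q` of degree `d` forces
`r ∣ q ^ d - 1`, hence `k ∣ d`. A root `ζ` of `Φ = 1 + X^B + ⋯ + X^(B(r-1))` has
`ζ^B ≠ 1` (as `r` is prime to `q`), so `ζ^B` has order `r`; hence `Φ` is coprime to `h`, and
since `(X^B - 1) Φ = X^(Br) - 1` annihilates `g`, `g^B = 1` on `W`. On `U`, `g` generates a copy of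
`𝔽_{q^k}` in which `g^B` has order `r`, so `g^B` generates it too: `g^B` has irreducible
characteristic polynomial on `U`. Hence `U` is `g^B`-irreducible, `g^B` has no fixed points in
`U`, and `ker (g^B - 1) = W`. -/

theorem ZMod.natCast_pow_eq_one_iff {q r : ℕ} (hq : 0 < q) (d : ℕ) :
    (q : ZMod r) ^ d = 1 ↔ r ∣ q ^ d - 1 := by
  rw [← Nat.modEq_iff_dvd' (Nat.one_le_pow _ _ hq), ← ZMod.natCast_eq_natCast_iff]
  push_cast
  exact eq_comm

namespace IsPPD

variable {q k r : ℕ}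

theorem orderOf_natCast (hppd : IsPPD q k r) (hq : 0 < q) (hk : 0 < k) :
    orderOf (q : ZMod r) = k := by
  obtain ⟨-, hdvd, hmin⟩ := hppd
  rw [orderOf_eq_iff hk]
  exact ⟨(ZMod.natCast_pow_eq_one_iff hq k).2 hdvd, fun i hik hi =>
    mt (ZMod.natCast_pow_eq_one_iff hq i).1 (hmin i hi hik)⟩

theorem dvd_of_dvd_pow_sub_one (hppd : IsPPD q k r) (hq : 0 < q) (hk : 0 < k) {d : ℕ}
    (hd : r ∣ q ^ d - 1) : k ∣ d :=
  hppd.orderOf_natCast hq hk ▸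
    orderOf_dvd_of_pow_eq_one ((ZMod.natCast_pow_eq_one_iff hq d).2 hd)

variable {F : Type*} [Field F] [Fintype F]

theorem natCast_ne_zero (hppd : IsPPD (Fintype.card F) k r) (hk : 0 < k) : (r : F) ≠ 0 := by
  intro hr
  obtain ⟨c, hc⟩ := hppd.2.1
  have h := congrArg (Nat.cast : ℕ → F) hc
  rw [Nat.cast_sub (Nat.one_le_pow _ _ Fintype.card_pos), Nat.cast_mul, hr, zero_mul] at h
  simp [zero_pow hk.ne'] at h

variable {L : Type*} [Field L] [Algebra F L]

theorem dvd_finrank [FiniteDimensional F L] (hppd : IsPPD (Fintype.card F) k r) (hk : 0 < k)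
    {x : L} (hx : orderOf x = r) : k ∣ Module.finrank F L := by
  have : Finite L := Module.finite_of_finite F
  have := Fintype.ofFinite L
  have hx0 : x ≠ 0 := by
    rintro rfl
    exact hppd.1.ne_zero (hx ▸ orderOf_eq_zero_iff'.2 fun n hn => by simp [hn.ne'])
  refine hppd.dvd_of_dvd_pow_sub_one Fintype.card_pos hk ?_
  rw [← Module.card_eq_pow_finrank, ← hx]
  exact orderOf_dvd_of_pow_eq_one (FiniteField.pow_card_sub_one_eq_one x hx0)

theorem dvd_natDegree_minpoly [Algebra.IsAlgebraic F L] (hppd : IsPPD (Fintype.card F) k r)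
    (hk : 0 < k) {x : L} (hx : orderOf x = r) : k ∣ (minpoly F x).natDegree := by
  have hint := (Algebra.IsAlgebraic.isAlgebraic (R := F) x).isIntegral
  have := IntermediateField.adjoin.finiteDimensional hint
  rw [← IntermediateField.adjoin.finrank hint]
  refine hppd.dvd_finrank hk (x := IntermediateField.AdjoinSimple.gen F x) ?_
  rw [← hx, ← orderOf_injective (IntermediateField.adjoin F {x}).val.toMonoidHom
    Subtype.val_injective]
  rfl

theorem isCoprime_geom_sum (hppd : IsPPD (Fintype.card F) k r) (hk : 0 < k) {h : F[X]}
    (hh : ∀ p : F[X], Irreducible p → p ∣ h → ¬ k ∣ p.natDegree) (s : ℕ) :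
    IsCoprime h (∑ i ∈ Finset.range r, (X ^ s) ^ i) := by
  have heval : ∀ {K : Type _} [Field K] [Algebra F K] {y : K}, y ^ s = 1 →
      aeval y (∑ i ∈ Finset.range r, (X ^ s : F[X]) ^ i) ≠ 0 := by
    intro K _ _ y hy
    simpa [hy] using (algebraMap F K).injective.ne (hppd.natCast_ne_zero hk)
  refine isCoprime_of_irreducible_dvd (fun h0 => heval (y := (1 : F)) (one_pow s) ?_) ?_
  · simp [h0.2]
  intro p hp hph hpΦ
  have := Fact.mk hp
  have := Fact.mk hppd.1
  have hroot : aeval (AdjoinRoot.root p) (∑ i ∈ Finset.range r, (X ^ s : F[X]) ^ i) = 0 := by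
    obtain ⟨c, hc⟩ := hpΦ
    rw [hc, map_mul, AdjoinRoot.aeval_eq, AdjoinRoot.mk_self, zero_mul]
  have hpow : (AdjoinRoot.root p ^ s) ^ r = 1 := by
    have := congrArg (aeval (AdjoinRoot.root p)) (geom_sum_mul (X ^ s : F[X]) r)
    simp only [map_mul, hroot, zero_mul, map_sub, map_pow, aeval_X, map_one] at this
    exact sub_eq_zero.1 this.symm
  have := (AdjoinRoot.powerBasis hp.ne_zero).finite
  refine hh p hp hph ?_
  rw [← AdjoinRoot.powerBasis_dim hp.ne_zero, ← PowerBasis.finrank]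
  exact hppd.dvd_finrank hk (orderOf_eq_prime hpow fun h1 => heval h1 hroot)

theorem pow_eq_one_of_pow_mul_eq_one {A : Type*} [Ring A] [Algebra F A]
    (hppd : IsPPD (Fintype.card F) k r) (hk : 0 < k) {h : F[X]}
    (hh : ∀ p : F[X], Irreducible p → p ∣ h → ¬ k ∣ p.natDegree) {a : A}
    (ha : aeval a h = 0) {s : ℕ} (has : a ^ (s * r) = 1) : a ^ s = 1 := by
  obtain ⟨u, v, huv⟩ := hppd.isCoprime_geom_sum hk hh s
  have key : (X ^ s - 1 : F[X]) = u * (X ^ s - 1) * h + v * (X ^ (s * r) - 1) := by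
    rw [pow_mul, ← geom_sum_mul (X ^ s : F[X]) r]
    linear_combination (1 - X ^ s : F[X]) * huv
  have := congrArg (aeval a) key
  simp only [map_add, map_mul, ha, mul_zero, zero_add, map_sub, map_pow, aeval_X, map_one,
    has, sub_self] at this
  exact sub_eq_zero.1 this

end IsPPD

section LinearAlgebra

variable {F V : Type*} [Field F] [AddCommGroup V] [Module F V]

theorem Irreducible.dvd_minpoly_of_dvd_charpoly [FiniteDimensional F V] {φ : Module.End F V}
    {p : F[X]} (hp : Irreducible p) (hpφ : p ∣ φ.charpoly) : p ∣ minpoly F φ := by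
  have := Fact.mk hp
  let φL := Module.End.baseChangeHom F (AdjoinRoot p) V φ
  have hroot : φL.charpoly.IsRoot (AdjoinRoot.root p) := by
    obtain ⟨c, hc⟩ := hpφ
    rw [show φL = φ.baseChange (AdjoinRoot p) from rfl, LinearMap.charpoly_baseChange, IsRoot,
      eval_map_algebraMap, hc, map_mul, AdjoinRoot.aeval_eq, AdjoinRoot.mk_self, zero_mul]
  obtain ⟨v, hv⟩ :=
    ((Module.End.hasEigenvalue_iff_isRoot_charpoly φL _).2 hroot).exists_hasEigenvector
  have hm : aeval φL ((minpoly F φ).map (algebraMap F (AdjoinRoot p))) = 0 := by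
    rw [aeval_map_algebraMap, aeval_algHom_apply, minpoly.aeval, map_zero]
  have := Module.End.aeval_apply_of_hasEigenvector hv
    (p := (minpoly F φ).map (algebraMap F (AdjoinRoot p)))
  rwa [hm, LinearMap.zero_apply, eq_comm, smul_eq_zero_iff_left hv.2, eval_map_algebraMap,
    AdjoinRoot.aeval_eq, AdjoinRoot.mk_eq_zero] at this

theorem LinearMap.coe_aeval_restrict (φ : Module.End F V) {U : Submodule F V}
    (hU : ∀ x ∈ U, φ x ∈ U) (p : F[X]) (x : U) :
    (aeval (φ.restrict hU) p x : V) = aeval φ p x := by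
  induction p using Polynomial.induction_on' with
  | add p q hp hq => simp [hp, hq]
  | monomial n a => simp [aeval_monomial, Module.End.pow_restrict n hU]

theorem LinearMap.coe_pow_restrict_apply (φ : Module.End F V) {U : Submodule F V}
    (hU : ∀ x ∈ U, φ x ∈ U) (m : ℕ) (x : U) :
    ((φ.restrict hU ^ m) x : V) = (φ ^ m) x := by
  rw [Module.End.pow_restrict, LinearMap.coe_restrict_apply]

theorem LinearMap.apply_mem_ker_aeval (φ : Module.End F V) (p : F[X]) :
    ∀ x ∈ LinearMap.ker (aeval φ p), φ x ∈ LinearMap.ker (aeval φ p) := by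
  intro x hx
  rw [LinearMap.mem_ker] at hx ⊢
  have hcomm := ((commute_X p).map (aeval φ)).eq
  rw [aeval_X] at hcomm
  rw [← Module.End.mul_apply, ← hcomm, Module.End.mul_apply, hx, map_zero]

theorem LinearMap.aeval_restrict_ker_aeval (φ : Module.End F V) (p : F[X]) :
    aeval (φ.restrict (φ.apply_mem_ker_aeval p)) p = 0 := by
  ext x
  simp [LinearMap.coe_aeval_restrict]

theorem LinearMap.ker_sub_one_eq_of_isCompl {T : Module.End F V} {U W : Submodule F V}
    (hUW : IsCompl U W) (hU : ∀ x ∈ U, T x = x → x = 0) (hW : ∀ x ∈ W, T x = x) :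
    LinearMap.ker (T - 1) = W := by
  refine le_antisymm (fun v hv => ?_) fun w hw => by simp [hW w hw]
  obtain ⟨u, hu, w, hw, rfl⟩ :=
    Submodule.mem_sup.1 (hUW.sup_eq_top ▸ Submodule.mem_top : v ∈ U ⊔ W)
  rw [LinearMap.mem_ker, LinearMap.sub_apply, Module.End.one_apply, map_add, hW w hw,
    sub_eq_zero, add_left_inj] at hv
  simpa [hU u hu hv] using hw

theorem LinearMap.pow_apply_eq_self_of_mem_ker_aeval [Fintype F] {k r s : ℕ}
    (hppd : IsPPD (Fintype.card F) k r) (hk : 0 < k) {h : F[X]}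
    (hh : ∀ p : F[X], Irreducible p → p ∣ h → ¬ k ∣ p.natDegree) {φ : Module.End F V}
    (hφ : φ ^ (s * r) = 1) : ∀ w ∈ LinearMap.ker (aeval φ h), (φ ^ s) w = w := by
  have hψ := hppd.pow_eq_one_of_pow_mul_eq_one hk hh (φ.aeval_restrict_ker_aeval h) (s := s) <| by
    ext; simp [LinearMap.coe_pow_restrict_apply, hφ]
  intro w hw
  simpa [LinearMap.coe_pow_restrict_apply] using congrArg (fun ψ => (ψ ⟨w, hw⟩ : V)) hψ

variable [FiniteDimensional F V]

theorem LinearMap.isCompl_ker_aeval_of_charpoly_eq_mul {φ : Module.End F V} {f h : F[X]}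
    (hφ : φ.charpoly = f * h) (hfh : IsCoprime f h) :
    IsCompl (LinearMap.ker (aeval φ f)) (LinearMap.ker (aeval φ h)) :=
  ⟨disjoint_ker_aeval_of_isCoprime φ hfh, codisjoint_iff.2 <| by
    rw [sup_ker_aeval_eq_ker_aeval_mul_of_coprime φ hfh, ← hφ, φ.aeval_self_charpoly,
      LinearMap.ker_zero]⟩

theorem LinearMap.charpoly_eq_mul_of_isCompl (φ : Module.End F V) {U W : Submodule F V}
    (hUW : IsCompl U W) (hU : ∀ x ∈ U, φ x ∈ U) (hW : ∀ x ∈ W, φ x ∈ W) :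
    φ.charpoly = (φ.restrict hU).charpoly * (φ.restrict hW).charpoly := by
  let e := Submodule.prodEquivOfIsCompl U W hUW
  have : (φ.restrict hU).prodMap (φ.restrict hW) = e.symm.conj φ := by
    ext x
    · simp [e, Submodule.projection_apply_of_mem_left _ (hU x x.2)]
    · simp [e, Submodule.projection_apply_of_mem_right _ (hU x x.2)]
    · simp [e, Submodule.projection_apply_of_mem_right _ (hW x x.2)]
    · simp [e, Submodule.projection_apply_of_mem_left _ (hW x x.2)]
  rw [← e.symm.charpoly_conj φ, ← this, LinearMap.charpoly_prodMap]

theorem LinearMap.associated_charpoly_restrict_ker_aeval {φ : Module.End F V} {f h : F[X]}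
    (hφ : φ.charpoly = f * h) (hf : Irreducible f) (hfh : ¬ f ∣ h) :
    Associated (φ.restrict (φ.apply_mem_ker_aeval f)).charpoly f := by
  set χ := φ.restrict (φ.apply_mem_ker_aeval f)
  set ψ := φ.restrict (φ.apply_mem_ker_aeval h)
  have hprod : χ.charpoly * ψ.charpoly = f * h := by
    rw [← hφ, φ.charpoly_eq_mul_of_isCompl (LinearMap.isCompl_ker_aeval_of_charpoly_eq_mul hφ
      ((Irreducible.coprime_iff_not_dvd hf).2 hfh))]
  have hfχ : f ∣ χ.charpoly := by
    refine (hf.prime.dvd_or_dvd (hprod ▸ dvd_mul_right f h)).resolve_right fun hfψ => hfh ?_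
    exact (hf.dvd_minpoly_of_dvd_charpoly hfψ).trans
      (minpoly.dvd F ψ (φ.aeval_restrict_ker_aeval h))
  have hχh : IsCoprime χ.charpoly h := by
    refine isCoprime_of_irreducible_dvd (fun h0 => χ.charpoly_monic.ne_zero h0.1) ?_
    intro z hz hzχ hzh
    have hzf : z ∣ f := (hz.dvd_minpoly_of_dvd_charpoly hzχ).trans
      (minpoly.dvd F χ (φ.aeval_restrict_ker_aeval f))
    exact hfh ((hz.associated_of_dvd hf hzf).symm.dvd.trans hzh)
  exact associated_of_dvd_dvd (hχh.dvd_of_dvd_mul_right (hprod ▸ dvd_mul_right _ _)) hfχ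

theorem LinearMap.finrank_ker_aeval_eq_natDegree {φ : Module.End F V} {f h : F[X]}
    (hφ : φ.charpoly = f * h) (hf : Irreducible f) (hfh : ¬ f ∣ h) :
    Module.finrank F (LinearMap.ker (aeval φ f)) = f.natDegree := by
  rw [← (φ.restrict (φ.apply_mem_ker_aeval f)).charpoly_natDegree]
  exact natDegree_eq_of_degree_eq
    (degree_eq_degree_of_associated (LinearMap.associated_charpoly_restrict_ker_aeval hφ hf hfh))

theorem LinearMap.eq_bot_or_eq_of_irreducible_charpoly_restrict {T : Module.End F V}
    {U W : Submodule F V} (hU : ∀ x ∈ U, T x ∈ U)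
    (hirr : Irreducible (T.restrict hU).charpoly) (hWU : W ≤ U) (hW : ∀ x ∈ W, T x ∈ W) :
    W = ⊥ ∨ W = U := by
  refine or_iff_not_imp_left.2 fun hW0 => Submodule.eq_of_le_of_finrank_le hWU ?_
  have : Nontrivial W := Submodule.nontrivial_iff_ne_bot.2 hW0
  set ω := T.restrict hW
  obtain ⟨z, hz, hzω⟩ := WfDvdMonoid.exists_irreducible_factor
    (fun hu => Module.finrank_pos.ne (natDegree_eq_zero_of_isUnit hu ▸ ω.charpoly_natDegree))
    ω.charpoly_monic.ne_zero
  have hannih : aeval ω (T.restrict hU).charpoly = 0 := by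
    ext x
    rw [LinearMap.zero_apply, Submodule.coe_zero, T.coe_aeval_restrict hW,
      ← T.coe_aeval_restrict hU _ ⟨x, hWU x.2⟩, LinearMap.aeval_self_charpoly]
    rfl
  have hzU := hz.associated_of_dvd hirr
    ((hz.dvd_minpoly_of_dvd_charpoly hzω).trans (minpoly.dvd F ω hannih))
  rw [← LinearMap.charpoly_natDegree (T.restrict hU), ← LinearMap.charpoly_natDegree ω,
    ← natDegree_eq_of_degree_eq (degree_eq_degree_of_associated hzU)]
  exact natDegree_le_of_dvd hzω ω.charpoly_monic.ne_zero

theorem LinearMap.irreducible_charpoly_pow [Fintype F] {χ : Module.End F V}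
    (hχ : Irreducible χ.charpoly) {r B : ℕ}
    (hppd : IsPPD (Fintype.card F) (Module.finrank F V) r) (hB : orderOf (χ ^ B) = r) :
    Irreducible (χ ^ B).charpoly := by
  set c := χ.charpoly
  have := Fact.mk hχ
  have := (AdjoinRoot.powerBasis hχ.ne_zero).finite
  have hdim : 0 < Module.finrank F V := χ.charpoly_natDegree ▸ hχ.natDegree_pos
  have := Module.nontrivial_of_finrank_pos hdim
  -- `Θ` identifies the field `F[X] ⧸ (c)` with the subalgebra `F[χ]` of `End V`.
  let Θ : AdjoinRoot c →ₐ[F] Module.End F V :=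
    Ideal.Quotient.liftₐ _ (aeval χ) fun a ha => by
      obtain ⟨b, rfl⟩ := Ideal.mem_span_singleton'.1 ha
      rw [map_mul, χ.aeval_self_charpoly, mul_zero]
  have hΘ : Function.Injective Θ := Θ.toRingHom.injective
  have hΘB : Θ (AdjoinRoot.root c ^ B) = χ ^ B := by
    rw [map_pow]
    exact congrArg (· ^ B) (aeval_X χ)
  have hord : orderOf (AdjoinRoot.root c ^ B) = r := by
    rw [← hB, ← hΘB]
    exact (orderOf_injective Θ.toMonoidHom hΘ _).symm
  have hmin : minpoly F (χ ^ B) = minpoly F (AdjoinRoot.root c ^ B) := by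
    rw [← hΘB, minpoly.algHom_eq Θ hΘ]
  have hint : IsIntegral F (χ ^ B) := Algebra.IsIntegral.isIntegral _
  have hdvd := hppd.dvd_natDegree_minpoly hdim hord
  rw [← hmin] at hdvd
  rw [Polynomial.eq_of_monic_of_dvd_of_natDegree_le (minpoly.monic hint) (χ ^ B).charpoly_monic
    (LinearMap.minpoly_dvd_charpoly _) ((χ ^ B).charpoly_natDegree ▸
      Nat.le_of_dvd (minpoly.natDegree_pos hint) hdvd)]
  exact hmin ▸ minpoly.irreducible (Algebra.IsIntegral.isIntegral _)

theorem LinearMap.pow_restrict_ker_aeval_ne_one [Fintype F] {φ : Module.End F V}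
    {f h : F[X]} {r B : ℕ} (hφ : φ.charpoly = f * h) (hf : Irreducible f)
    (hh : ∀ p : F[X], Irreducible p → p ∣ h → ¬ f.natDegree ∣ p.natDegree)
    (hppd : IsPPD (Fintype.card F) f.natDegree r) (hBr : φ ^ (B * r) = 1) (hB : φ ^ B ≠ 1) :
    (φ ^ B).restrict (Module.End.pow_apply_mem_of_forall_mem B (φ.apply_mem_ker_aeval f)) ≠
      1 := by
  refine fun h1 => hB (LinearMap.ext_on_codisjoint (LinearMap.isCompl_ker_aeval_of_charpoly_eq_mul
    hφ ((Irreducible.coprime_iff_not_dvd hf).2 fun hd => hh f hf hd dvd_rfl)).codisjoint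
    (fun u hu => ?_)
    (LinearMap.pow_apply_eq_self_of_mem_ker_aeval hppd hf.natDegree_pos hh hBr))
  simpa using congrArg (fun ψ => (ψ ⟨u, hu⟩ : V)) h1

theorem LinearMap.irreducible_charpoly_restrict_pow [Fintype F] {φ : Module.End F V}
    {f h : F[X]} {r B : ℕ} (hφ : φ.charpoly = f * h) (hf : Irreducible f)
    (hh : ∀ p : F[X], Irreducible p → p ∣ h → ¬ f.natDegree ∣ p.natDegree)
    (hppd : IsPPD (Fintype.card F) f.natDegree r) (hBr : φ ^ (B * r) = 1) (hB : φ ^ B ≠ 1) :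
    Irreducible ((φ ^ B).restrict
      (Module.End.pow_apply_mem_of_forall_mem B (φ.apply_mem_ker_aeval f))).charpoly := by
  have := Fact.mk hppd.1
  have hfh : ¬ f ∣ h := fun hd => hh f hf hd dvd_rfl
  have hne := LinearMap.pow_restrict_ker_aeval_ne_one hφ hf hh hppd hBr hB
  rw [← Module.End.pow_restrict B (φ.apply_mem_ker_aeval f)] at hne ⊢
  refine LinearMap.irreducible_charpoly_pow
    ((LinearMap.associated_charpoly_restrict_ker_aeval hφ hf hfh).symm.irreducible hf)
    (LinearMap.finrank_ker_aeval_eq_natDegree hφ hf hfh ▸ hppd) (orderOf_eq_prime ?_ hne)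
  rw [← pow_mul]
  ext; simp [LinearMap.coe_pow_restrict_apply, hBr]

theorem LinearMap.ker_pow_sub_one_eq_ker_aeval [Fintype F] {φ : Module.End F V}
    {f h : F[X]} {r B : ℕ} (hφ : φ.charpoly = f * h) (hf : Irreducible f)
    (hh : ∀ p : F[X], Irreducible p → p ∣ h → ¬ f.natDegree ∣ p.natDegree)
    (hppd : IsPPD (Fintype.card F) f.natDegree r) (hBr : φ ^ (B * r) = 1) (hB : φ ^ B ≠ 1) :
    LinearMap.ker (φ ^ B - 1) = LinearMap.ker (aeval φ h) := by
  set U := LinearMap.ker (aeval φ f)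
  have hUB := Module.End.pow_apply_mem_of_forall_mem B (φ.apply_mem_ker_aeval f)
  have hmem : ∀ {u}, u ∈ U ⊓ LinearMap.ker (φ ^ B - 1) ↔ u ∈ U ∧ (φ ^ B) u = u := by
    simp [sub_eq_zero]
  refine LinearMap.ker_sub_one_eq_of_isCompl (LinearMap.isCompl_ker_aeval_of_charpoly_eq_mul hφ
    ((Irreducible.coprime_iff_not_dvd hf).2 fun hd => hh f hf hd dvd_rfl)) ?_
    (LinearMap.pow_apply_eq_self_of_mem_ker_aeval hppd hf.natDegree_pos hh hBr)
  obtain hbot | htop := LinearMap.eq_bot_or_eq_of_irreducible_charpoly_restrict hUB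
    (LinearMap.irreducible_charpoly_restrict_pow hφ hf hh hppd hBr hB) inf_le_left
    fun x hx => hmem.2 ⟨hUB x (hmem.1 hx).1, congrArg _ (hmem.1 hx).2⟩
  · exact fun u hu hfix => (Submodule.mem_bot F).1 (hbot ▸ hmem.2 ⟨hu, hfix⟩)
  · refine absurd (LinearMap.ext fun u => Subtype.ext ?_)
      (LinearMap.pow_restrict_ker_aeval_ne_one hφ hf hh hppd hBr hB)
    simpa using (hmem.1 (htop.symm ▸ u.2 : (u : V) ∈ U ⊓ LinearMap.ker (φ ^ B - 1))).2

end LinearAlgebra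

section SpecialLinearGroup

variable {n : Type*} [Fintype n] [DecidableEq n] {R : Type*} [CommRing R]

theorem Matrix.mulVecLin_pow (M : Matrix n n R) (m : ℕ) : (M ^ m).mulVecLin = M.mulVecLin ^ m :=
  map_pow Matrix.toLinAlgEquiv' M m

theorem Matrix.SpecialLinearGroup.orderOf_mulVecLin (g : Matrix.SpecialLinearGroup n R) :
    orderOf (Matrix.mulVecLin (g : Matrix n n R)) = orderOf g :=
  orderOf_injective
    (Matrix.toLinAlgEquiv'.toMonoidHom.comp Matrix.SpecialLinearGroup.coeMonoidHom)
    (Matrix.toLinAlgEquiv'.injective.comp Subtype.val_injective) g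

end SpecialLinearGroup

theorem stmt9_general (n : ℕ) (F : Type) [Field F] [Fintype F]
    (k : ℕ)
    (g : Matrix.SpecialLinearGroup (Fin n) F) (hg : g ∈ QkPPD n F k) :
    ∃ B : ℕ, 0 < B ∧
      Module.finrank F (LinearMap.ker
          (Matrix.mulVecLin ((g ^ B : Matrix.SpecialLinearGroup (Fin n) F) :
            Matrix (Fin n) (Fin n) F) - LinearMap.id)) = n - k ∧
      ∃ U : Submodule F (Fin n → F),
        Module.finrank F U = k ∧
        (∀ x ∈ U, Matrix.mulVecLin ((g : Matrix (Fin n) (Fin n) F)) x ∈ U) ∧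
        IsCompl U (LinearMap.ker
          (Matrix.mulVecLin ((g ^ B : Matrix.SpecialLinearGroup (Fin n) F) :
            Matrix (Fin n) (Fin n) F) - LinearMap.id)) ∧
        ∀ W : Submodule F (Fin n → F), W ≤ U →
          (∀ x ∈ W, Matrix.mulVecLin ((g ^ B : Matrix.SpecialLinearGroup (Fin n) F) :
            Matrix (Fin n) (Fin n) F) x ∈ W) →
          W = ⊥ ∨ W = U := by
  obtain ⟨⟨f, h, hch, hf, rfl, hh⟩, r, hppd, B, hBr⟩ := hg
  set φ := Matrix.mulVecLin (g : Matrix (Fin n) (Fin n) F)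
  have hφ : φ.charpoly = f * h := by rw [Matrix.charpoly_mulVecLin, hch]
  have hfh : ¬ f ∣ h := fun hd => hh f hf hd dvd_rfl
  have hB0 : 0 < B := Nat.pos_of_ne_zero fun hB => (orderOf_pos g).ne' (by rw [hBr, hB, mul_zero])
  rw [← Matrix.SpecialLinearGroup.orderOf_mulVecLin] at hBr
  have hφBr : φ ^ (B * r) = 1 := by rw [mul_comm, ← hBr, pow_orderOf_eq_one]
  have hφB : φ ^ B ≠ 1 :=
    pow_ne_one_of_lt_orderOf hB0.ne' (hBr ▸ lt_mul_of_one_lt_left hB0 hppd.1.one_lt)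
  have hker : LinearMap.ker (φ ^ B - LinearMap.id) = LinearMap.ker (aeval φ h) :=
    LinearMap.ker_pow_sub_one_eq_ker_aeval hφ hf hh hppd hφBr hφB
  have hUW := LinearMap.isCompl_ker_aeval_of_charpoly_eq_mul hφ
    ((Irreducible.coprime_iff_not_dvd hf).2 hfh)
  have hn := Submodule.finrank_add_eq_of_isCompl hUW
  rw [Module.finrank_fin_fun, LinearMap.finrank_ker_aeval_eq_natDegree hφ hf hfh] at hn
  refine ⟨B, hB0, ?_⟩
  rw [Matrix.SpecialLinearGroup.coe_pow, Matrix.mulVecLin_pow, hker]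
  exact ⟨by omega, _, LinearMap.finrank_ker_aeval_eq_natDegree hφ hf hfh,
    φ.apply_mem_ker_aeval f, hUW, fun W hWU hW =>
      LinearMap.eq_bot_or_eq_of_irreducible_charpoly_restrict _
        (LinearMap.irreducible_charpoly_restrict_pow hφ hf hh hppd hφBr hφB) hWU hW⟩

theorem stmt9 (n : ℕ) (F : Type) [Field F] [Fintype F]
    (k : ℕ) (hk1 : 1 ≤ k) (hkn : k ≤ n)
    (g : Matrix.SpecialLinearGroup (Fin n) F) (hg : g ∈ QkPPD n F k) :
    ∃ B : ℕ, 0 < B ∧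
      Module.finrank F (LinearMap.ker
          (Matrix.mulVecLin ((g ^ B : Matrix.SpecialLinearGroup (Fin n) F) :
            Matrix (Fin n) (Fin n) F) - LinearMap.id)) = n - k ∧
      ∃ U : Submodule F (Fin n → F),
        Module.finrank F U = k ∧
        (∀ x ∈ U, Matrix.mulVecLin ((g : Matrix (Fin n) (Fin n) F)) x ∈ U) ∧
        IsCompl U (LinearMap.ker
          (Matrix.mulVecLin ((g ^ B : Matrix.SpecialLinearGroup (Fin n) F) :
            Matrix (Fin n) (Fin n) F) - LinearMap.id)) ∧
        ∀ W : Submodule F (Fin n → F), W ≤ U →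
          (∀ x ∈ W, Matrix.mulVecLin ((g ^ B : Matrix.SpecialLinearGroup (Fin n) F) :
            Matrix (Fin n) (Fin n) F) x ∈ W) →
          W = ⊥ ∨ W = U :=
  stmt9_general n F k g hg
end

section
/- Let m and n be integers with 2 ≤ m ≤ n. Let A be the set of permutations of an n-element set whose multiset of cycle lengths (including fixed points as cycles of length 1) contains m exactly once and has every other entry not divisible by m, and let B be the set of permutations of an (n−m)-element set with no cycle of length divisible by m. Then m · (n−m)! · |A| = n! · |B|; equivalently, |A|/n! = (1/m) · |B|/(n−m)!. -/
/-- The multiset of cycle lengths of a permutation, including fixed points as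
cycles of length `1`. -/
def fullCycleType {α : Type} [Fintype α] [DecidableEq α] (σ : Equiv.Perm α) : Multiset ℕ :=
  σ.cycleType + Multiset.replicate (Fintype.card α - σ.support.card) 1

/-- The set of permutations of an `n`-element set whose multiset of cycle lengths
(including fixed points as cycles of length `1`) contains `m` exactly once and has
every other entry not divisible by `m`. -/
def bmSet (n m : ℕ) : Set (Equiv.Perm (Fin n)) :=
  {σ | (fullCycleType σ).count m = 1 ∧ ∀ l ∈ (fullCycleType σ).erase m, ¬ m ∣ l}

/-!
Sort both sides by cycle type. Mathlib's class formula counts the permutations of `α` with cycle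
type `ν` as `(card α)! / ((card α - ν.sum)! * ν.prod * ∏ k ∈ ν.toFinset, (ν.count k)!)`.
Passing from `μ` on `β` to `m ::ₘ μ` on `α`, where `card α = card β + m` and `m ∉ μ`, leaves the
number of fixed points and all multiplicity factorials unchanged and multiplies `ν.prod` by `m`.
Summing over the cycle types without entries divisible by `m` gives the identity.
-/

open Finset Nat

namespace Equiv.Perm

variable {α β : Type*} [Fintype α] [DecidableEq α] [Fintype β] [DecidableEq β]
  {m : ℕ} {μ : Multiset ℕ}

theorem exists_cycleType_cons_iff (hm : 2 ≤ m) (hcard : Fintype.card α = Fintype.card β + m) :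
    (∃ σ : Perm α, σ.cycleType = m ::ₘ μ) ↔ ∃ τ : Perm β, τ.cycleType = μ := by
  simp only [exists_with_cycleType_iff, Multiset.sum_cons, Multiset.forall_mem_cons, hcard]
  constructor
  · rintro ⟨hsum, -, h2⟩; exact ⟨by omega, h2⟩
  · rintro ⟨hsum, h2⟩; exact ⟨by omega, hm, h2⟩

theorem card_cycleType_cons_mul_factorial (hm : 2 ≤ m)
    (hcard : Fintype.card α = Fintype.card β + m) (hμ : m ∉ μ) :
    #{σ : Perm α | σ.cycleType = m ::ₘ μ} * m * (Fintype.card β)! =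
      (Fintype.card α)! * #{τ : Perm β | τ.cycleType = μ} := by
  by_cases hex : ∃ τ : Perm β, τ.cycleType = μ
  · have hα := card_of_cycleType_mul_eq α (m ::ₘ μ)
    have hβ := card_of_cycleType_mul_eq β μ
    have hexα := (exists_cycleType_cons_iff hm hcard).mpr hex
    rw [if_pos ((exists_with_cycleType_iff α).mp hexα)] at hα
    rw [if_pos ((exists_with_cycleType_iff β).mp hex)] at hβ
    have hcount : ∀ k ∈ μ.toFinset, (m ::ₘ μ).count k = μ.count k := fun k hk =>
      Multiset.count_cons_of_ne (by rintro rfl; exact hμ (Multiset.mem_toFinset.mp hk)) μ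
    rw [Multiset.sum_cons, Multiset.prod_cons, Multiset.toFinset_cons,
      prod_insert (by simpa using hμ), Multiset.count_cons_self, Multiset.count_eq_zero_of_notMem hμ,
      prod_congr rfl fun k hk => congrArg Nat.factorial (hcount k hk),
      show Fintype.card α - (m + μ.sum) = Fintype.card β - μ.sum by omega] at hα
    rw [← hα, ← hβ]
    ring
  · have hβ0 : #{τ : Perm β | τ.cycleType = μ} = 0 := by
      rw [card_of_cycleType_eq_zero_iff, ← exists_with_cycleType_iff]; exact hex
    have hα0 : #{σ : Perm α | σ.cycleType = m ::ₘ μ} = 0 := by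
      rw [card_of_cycleType_eq_zero_iff, ← exists_with_cycleType_iff,
        exists_cycleType_cons_iff hm hcard]; exact hex
    rw [hα0, hβ0, zero_mul, zero_mul, mul_zero]

theorem mul_factorial_mul_card_cycleType_cons (hm : 2 ≤ m)
    (hcard : Fintype.card α = Fintype.card β + m) (S : Multiset ℕ → Prop)
    (hS : ∀ μ, S μ → m ∉ μ) :
    m * (Fintype.card β)! * Nat.card {σ : Perm α | ∃ μ, S μ ∧ σ.cycleType = m ::ₘ μ} =
      (Fintype.card α)! * Nat.card {τ : Perm β | S τ.cycleType} := by
  classical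
  set U := ({τ : Perm β | S τ.cycleType} : Finset (Perm β)).image cycleType
  have hU : ∀ μ ∈ U, S μ := by
    intro μ hμ
    obtain ⟨τ, hτ, rfl⟩ := mem_image.mp hμ
    exact (mem_filter.mp hτ).2
  have hB : Nat.card {τ : Perm β | S τ.cycleType} = ∑ μ ∈ U, #{τ : Perm β | τ.cycleType = μ} := by
    rw [Nat.card_eq_card_toFinset, Set.toFinset_ofPred, card_eq_sum_card_image cycleType]
    refine sum_congr rfl fun μ hμ => congrArg card ?_
    ext τ
    simp only [mem_filter, mem_univ, true_and]
    exact ⟨And.right, fun h => ⟨h ▸ hU μ hμ, h⟩⟩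
  have hA : Nat.card {σ : Perm α | ∃ μ, S μ ∧ σ.cycleType = m ::ₘ μ} =
      ∑ μ ∈ U, #{σ : Perm α | σ.cycleType = m ::ₘ μ} := by
    rw [Nat.card_eq_card_toFinset, Set.toFinset_ofPred,
      card_eq_sum_card_fiberwise (f := fun σ : Perm α => σ.cycleType.erase m) (t := U)]
    · refine sum_congr rfl fun μ hμ => congrArg card ?_
      ext σ
      simp only [mem_filter, mem_univ, true_and]
      constructor
      · rintro ⟨⟨ν, -, hν⟩, rfl⟩
        rw [hν, Multiset.erase_cons_head]
      · intro h
        exact ⟨⟨μ, hU μ hμ, h⟩, by rw [h, Multiset.erase_cons_head]⟩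
    · rintro σ hσ
      obtain ⟨μ, hSμ, hσμ⟩ := (mem_filter.mp hσ).2
      obtain ⟨τ, hτ⟩ := (exists_cycleType_cons_iff hm hcard).mp ⟨σ, hσμ⟩
      simp only [hσμ, Multiset.erase_cons_head]
      exact mem_image.mpr ⟨τ, mem_filter.mpr ⟨mem_univ _, hτ ▸ hSμ⟩, hτ⟩
  rw [hA, hB, mul_sum, mul_sum]
  exact sum_congr rfl fun μ hμ => by
    rw [← card_cycleType_cons_mul_factorial hm hcard (hS μ (hU μ hμ))]; ring

end Equiv.Perm

theorem forall_mem_fullCycleType_iff {α : Type} [Fintype α] [DecidableEq α] {p : ℕ → Prop}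
    (hp : p 1) (σ : Equiv.Perm α) : (∀ l ∈ fullCycleType σ, p l) ↔ ∀ l ∈ σ.cycleType, p l := by
  simp only [fullCycleType, Multiset.mem_add, Multiset.mem_replicate]
  exact ⟨fun h l hl => h l (Or.inl hl), fun h l => Or.rec (h l) fun hl => hl.2 ▸ hp⟩

theorem mem_bmSet_iff {n m : ℕ} (hm : 2 ≤ m) (σ : Equiv.Perm (Fin n)) :
    σ ∈ bmSet n m ↔ ∃ μ, (∀ k ∈ μ, ¬ m ∣ k) ∧ σ.cycleType = m ::ₘ μ := by
  have hm1 : ¬ m ∣ 1 := by rw [Nat.dvd_one]; omega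
  have hcount : (fullCycleType σ).count m = σ.cycleType.count m := by
    rw [fullCycleType, Multiset.count_add, Multiset.count_replicate, if_neg (by omega), add_zero]
  simp only [bmSet, Set.mem_ofPred_eq, hcount]
  constructor
  · rintro ⟨hone, hdvd⟩
    have hmem : m ∈ σ.cycleType := Multiset.count_pos.mp (by omega)
    refine ⟨σ.cycleType.erase m, fun k hk => hdvd k ?_, (Multiset.cons_erase hmem).symm⟩
    rw [fullCycleType, Multiset.erase_add_left_pos _ hmem]
    exact Multiset.mem_add.mpr (Or.inl hk)
  · rintro ⟨μ, hμ, hσ⟩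
    have hmμ : m ∉ μ := fun h => hμ m h dvd_rfl
    refine ⟨by rw [hσ, Multiset.count_cons_self, Multiset.count_eq_zero_of_notMem hmμ], ?_⟩
    simp only [fullCycleType, hσ, Multiset.cons_add, Multiset.erase_cons_head,
      Multiset.mem_add, Multiset.mem_replicate]
    exact fun l => Or.rec (hμ l) fun hl => hl.2 ▸ hm1

theorem stmt12 (n m : ℕ) (hm : 2 ≤ m) (hmn : m ≤ n) :
    m * (n - m).factorial * Nat.card (bmSet n m) =
        n.factorial *
          Nat.card {σ : Equiv.Perm (Fin (n - m)) | ∀ l ∈ fullCycleType σ, ¬ m ∣ l} ∧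
      (Nat.card (bmSet n m) : ℝ) / (n.factorial : ℝ) =
        (1 / (m : ℝ)) *
          (Nat.card {σ : Equiv.Perm (Fin (n - m)) | ∀ l ∈ fullCycleType σ, ¬ m ∣ l} : ℝ) /
            ((n - m).factorial : ℝ) := by
  have hcard : Fintype.card (Fin n) = Fintype.card (Fin (n - m)) + m := by
    simp only [Fintype.card_fin]; omega
  have hA : bmSet n m = {σ | ∃ μ, (∀ k ∈ μ, ¬ m ∣ k) ∧ σ.cycleType = m ::ₘ μ} :=
    Set.ext (mem_bmSet_iff hm)
  have hB : {τ : Equiv.Perm (Fin (n - m)) | ∀ l ∈ fullCycleType τ, ¬ m ∣ l} =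
      {τ | ∀ l ∈ τ.cycleType, ¬ m ∣ l} :=
    Set.ext fun τ => forall_mem_fullCycleType_iff (by rw [Nat.dvd_one]; omega) τ
  have hnat : m * (n - m)! * Nat.card (bmSet n m) =
      n ! * Nat.card {τ : Equiv.Perm (Fin (n - m)) | ∀ l ∈ fullCycleType τ, ¬ m ∣ l} := by
    rw [hA, hB]
    simpa only [Fintype.card_fin] using Equiv.Perm.mul_factorial_mul_card_cycleType_cons hm hcard
      (fun μ => ∀ k ∈ μ, ¬ m ∣ k) fun μ hμ hmμ => hμ m hmμ dvd_rfl
  refine ⟨hnat, ?_⟩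
  have hm0 : (m : ℝ) ≠ 0 := Nat.cast_ne_zero.mpr (by omega)
  have hnatℝ : (m * (n - m)! * Nat.card (bmSet n m) : ℝ) =
      n ! * Nat.card {τ : Equiv.Perm (Fin (n - m)) | ∀ l ∈ fullCycleType τ, ¬ m ∣ l} := by
    exact_mod_cast hnat
  field_simp
  linear_combination hnatℝ
end

section
/- Let T be a finite abelian group and r a prime such that T contains an element whose order is divisible by r. Then the number of elements of T whose order is divisible by r is at least (1 − 1/r)·|T|. -/
/-!
The elements of order prime to `r` form a subgroup `H` (orders of products divide the lcm of
the orders). By Cauchy's theorem `r ∤ |H|`, so `r` divides the index `[T : H]` as soon as it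
divides `|T|`; hence `|H| ≤ |T| / r`, and the elements of order divisible by `r` are exactly
the complement of `H`.
-/

namespace CommGroup

variable {G : Type*} [CommGroup G] {p : ℕ}

def orderPrimeTo (hp : p.Prime) : Subgroup G where
  carrier := {g | ¬ p ∣ orderOf g}
  one_mem' := by simp [hp.ne_one]
  mul_mem' {a b} ha hb hab := by
    have : p ∣ orderOf a * orderOf b :=
      hab.trans <| (Commute.all a b).orderOf_mul_dvd_lcm.trans (Nat.lcm_dvd_mul _ _)
    exact (hp.dvd_mul.mp this).elim ha hb
  inv_mem' := by simp [orderOf_inv]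

theorem not_dvd_card_orderPrimeTo [Finite G] (hp : p.Prime) :
    ¬ p ∣ Nat.card (orderPrimeTo hp : Subgroup G) := by
  have := Fact.mk hp
  intro hdvd
  obtain ⟨g, hg⟩ := exists_prime_orderOf_dvd_card' p hdvd
  exact g.2 (by rw [Subgroup.orderOf_coe, hg])

theorem mul_card_orderPrimeTo_le [Finite G] (hp : p.Prime) (hpG : p ∣ Nat.card G) :
    p * Nat.card (orderPrimeTo hp : Subgroup G) ≤ Nat.card G := by
  set H : Subgroup G := orderPrimeTo hp
  have hcard : Nat.card H * H.index = Nat.card G := H.card_mul_index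
  have hindex : p ∣ H.index :=
    (hp.dvd_mul.mp (hcard ▸ hpG)).resolve_left (not_dvd_card_orderPrimeTo hp)
  have hpos : 0 < H.index := Nat.pos_of_ne_zero H.index_ne_zero_of_finite
  calc p * Nat.card H ≤ H.index * Nat.card H := Nat.mul_le_mul_right _ (Nat.le_of_dvd hpos hindex)
    _ = Nat.card G := by rw [mul_comm, hcard]

theorem card_dvd_orderOf_add_card_orderPrimeTo [Finite G] (hp : p.Prime) :
    Nat.card {g : G | p ∣ orderOf g} + Nat.card (orderPrimeTo hp : Subgroup G) = Nat.card G := by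
  have hcompl : {g : G | p ∣ orderOf g}ᶜ = ((orderPrimeTo hp : Subgroup G) : Set G) := rfl
  rw [← Set.ncard_add_ncard_compl {g : G | p ∣ orderOf g}, hcompl, ← SetLike.coe_sort_coe,
    Nat.card_coe_set_eq, Nat.card_coe_set_eq]

end CommGroup

open CommGroup in
theorem stmt15 (T : Type) [CommGroup T] [Fintype T] (r : ℕ) (hr : r.Prime)
    (h : ∃ t : T, r ∣ orderOf t) :
    (1 - 1 / (r : ℝ)) * (Fintype.card T : ℝ) ≤
      (Nat.card {t : T | r ∣ orderOf t} : ℝ) := by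
  obtain ⟨t, ht⟩ := h
  have hrT : r ∣ Nat.card T := ht.trans (orderOf_dvd_natCard t)
  have hle : (r : ℝ) * Nat.card (orderPrimeTo hr : Subgroup T) ≤ Nat.card T := by
    exact_mod_cast mul_card_orderPrimeTo_le hr hrT
  have hsum : (Nat.card {t : T | r ∣ orderOf t} : ℝ) + Nat.card (orderPrimeTo hr : Subgroup T)
      = Nat.card T := by
    exact_mod_cast card_dvd_orderOf_add_card_orderPrimeTo hr
  have hr0 : (0 : ℝ) < r := by exact_mod_cast hr.pos
  have hH : (Nat.card (orderPrimeTo hr : Subgroup T) : ℝ) ≤ Nat.card T / r :=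
    (le_div_iff₀ hr0).mpr (by linarith)
  rw [← Nat.card_eq_fintype_card]
  calc (1 - 1 / (r : ℝ)) * Nat.card T = Nat.card T - Nat.card T / r := by ring
    _ ≤ Nat.card {t : T | r ∣ orderOf t} := by linarith
end

section
/- Let F be a finite field and let f be a monic irreducible polynomial over F of degree at least 2 such that for every root a of f in an algebraic closure of F, the element a^{-1} is also a root of f. Then the degree of f is even. -/
/-!
If `a` is a root of the irreducible `f`, so is `a⁻¹`, hence `a` is a root of the reverse of `f`
and `f ∣ f.reverse`. Having no root in `F`, `f` has nonzero constant term, so `f.reverse` has the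
same degree and `f.reverse = c • f`; evaluating at `1` gives `c = 1`. A palindromic polynomial of
odd degree vanishes at `-1`, since the terms of degrees `i` and `n - i` cancel there; this is
impossible for an irreducible polynomial of degree at least `2`.
-/

open Polynomial

namespace Polynomial

theorem eval_one_reverse {R : Type*} [CommSemiring R] (p : R[X]) :
    p.reverse.eval 1 = p.eval 1 := by
  let : Invertible (1 : R) := invertibleOne
  simpa using eval₂_reverse_mul_pow (RingHom.id R) 1 p

theorem eval_neg_one_eq_zero_of_reverse_eq_self {R : Type*} [CommRing R] {p : R[X]}
    (hp : p.reverse = p) (hodd : Odd p.natDegree) : p.eval (-1) = 0 := by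
  set n := p.natDegree
  have hsymm : ∀ i ≤ n, p.coeff (n - i) = p.coeff i := fun i hi => by
    conv_rhs => rw [← hp]
    rw [coeff_reverse, revAt_le hi]
  have hsign : ∀ i ≤ n, (-1 : R) ^ (n - i) = -(-1) ^ i := fun i hi => by
    rcases Nat.even_or_odd i with hi' | hi'
    · rw [(Nat.Odd.sub_even hi hodd hi').neg_one_pow, hi'.neg_one_pow]
    · rw [(Nat.Odd.sub_odd hodd hi').neg_one_pow, hi'.neg_one_pow, neg_neg]
  rw [eval_eq_sum_range]
  refine Finset.sum_involution (fun i _ => n - i) (fun i hi => ?_) (fun i hi _ => ?_)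
    (fun i hi => ?_) (fun i hi => ?_)
  · have hi : i ≤ n := Nat.lt_succ_iff.1 (Finset.mem_range.1 hi)
    rw [hsymm i hi, hsign i hi]
    ring
  · have hi : i ≤ n := Nat.lt_succ_iff.1 (Finset.mem_range.1 hi)
    obtain ⟨k, hk⟩ := hodd
    change n - i ≠ i
    omega
  · exact Finset.mem_range.2 (by omega)
  · have hi : i ≤ n := Nat.lt_succ_iff.1 (Finset.mem_range.1 hi)
    change n - (n - i) = i
    omega

theorem reverse_eq_self_of_dvd_reverse {R : Type*} [CommRing R] [IsDomain R] {f : R[X]}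
    (hdvd : f ∣ f.reverse) (h0 : f.coeff 0 ≠ 0) (h1 : f.eval 1 ≠ 0) : f.reverse = f := by
  obtain ⟨g, hg⟩ := hdvd
  have hf : f ≠ 0 := fun h => h0 (by simp [h])
  have hg0 : g ≠ 0 := by rintro rfl; exact hf (reverse_eq_zero.1 (by simpa using hg))
  have hdeg : f.reverse.natDegree = f.natDegree := by
    rw [reverse_natDegree, natTrailingDegree_eq_zero.2 (Or.inr h0), Nat.sub_zero]
  obtain ⟨c, rfl⟩ : ∃ c, C c = g := by
    rw [← natDegree_eq_zero]
    have := hdeg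
    rw [hg, natDegree_mul hf hg0] at this
    omega
  have hc : c = 1 := by
    have := eval_one_reverse f
    rw [hg, eval_mul, eval_C] at this
    exact mul_left_cancel₀ h1 (this.trans (mul_one _).symm)
  rw [hg, hc, C_1, mul_one]

theorem dvd_reverse_of_aeval_inv_eq_zero {K L : Type*} [Field K] [Field L] [Algebra K L]
    {f : K[X]} (hf : Irreducible f) {a : L} (ha0 : a ≠ 0) (ha : aeval a f = 0)
    (hainv : aeval a⁻¹ f = 0) : f ∣ f.reverse := by
  let := invertibleOfNonzero (inv_ne_zero ha0)
  refine (hf.dvd_iff_aeval_eq_zero ha).1 ?_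
  have := (eval₂_reverse_eq_zero_iff (algebraMap K L) a⁻¹ f).2 hainv
  rwa [invOf_eq_inv, inv_inv, ← aeval_def] at this

end Polynomial

theorem stmt16_general (F : Type) [Field F] (f : Polynomial F)
    (hirr : Irreducible f) (hdeg : 2 ≤ f.natDegree)
    (hsc : ∀ a : AlgebraicClosure F, Polynomial.aeval a f = 0 →
      Polynomial.aeval a⁻¹ f = 0) :
    Even f.natDegree := by
  have hnoroot (x : F) : ¬f.IsRoot x := hirr.not_isRoot_of_natDegree_ne_one (by omega)
  obtain ⟨a, ha⟩ := IsAlgClosed.exists_aeval_eq_zero (AlgebraicClosure F) f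
    (by rw [degree_eq_natDegree hirr.ne_zero]; exact_mod_cast (by omega : f.natDegree ≠ 0))
  have ha0 : a ≠ 0 := by
    rintro rfl
    exact hnoroot 0 (by simpa [aeval_def, eval₂_at_zero, coeff_zero_eq_eval_zero] using ha)
  have hpal : f.reverse = f :=
    reverse_eq_self_of_dvd_reverse (dvd_reverse_of_aeval_inv_eq_zero hirr ha0 ha (hsc a ha))
      (by rw [coeff_zero_eq_eval_zero]; exact hnoroot 0) (hnoroot 1)
  by_contra hodd
  exact hnoroot (-1) (eval_neg_one_eq_zero_of_reverse_eq_self hpal (Nat.not_even_iff_odd.1 hodd))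

theorem stmt16 (F : Type) [Field F] [Fintype F] (f : Polynomial F)
    (hmonic : f.Monic) (hirr : Irreducible f) (hdeg : 2 ≤ f.natDegree)
    (hsc : ∀ a : AlgebraicClosure F, Polynomial.aeval a f = 0 →
      Polynomial.aeval a⁻¹ f = 0) :
    Even f.natDegree :=
  stmt16_general F f hirr hdeg hsc
end
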